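/- Consider the randomized greedy freezing procedure with parameter p′ ∈ (0,1) in the CSP setting. Suppose that each constraint shares a variable with at most Δ other constraints, that ℙ[C] ≤ p for every C ∈ 𝒞, and that p ≤ p′/(10Δ³). Let ℱ = ⋃_{i≤s} ℱ_i be the (random) set of constraints declared dangerous at any stage, and let G²(ℱ) be the graph with vertex set ℱ and an edge between distinct Cᵢ, C_j ∈ ℱ if and only if dist_{G(𝒞)}(Cᵢ, C_j) ≤ 2. Then for every L ≥ 0, the ν-probability that G²(ℱ) has a connected component of size at least L is at most n·Δ·2^{−L/Δ}. -/

import Mathlib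

open Finset
open scoped Classical

/-! ## The CSP setting

A constraint satisfaction problem has variables `Fin n`, each taking values in `Fin q`
(the uniform product measure `ℙ` makes the variables independent and uniform), and
constraints `Fin m`; constraint `j` depends only on the variables in `vbl j`, and
`viol j σ` means that the assignment `σ` violates constraint `j`. -/

/-- A full assignment `σ` is compatible with (extends) the partial assignment `X`. -/
def Compat {n q : ℕ} (X : Fin n → Option (Fin q)) (σ : Fin n → Fin q) : Prop :=
  ∀ v a, X v = some a → σ v = a

/-- `condP viol j X` is the conditional probability `ℙ[C_j | X]` that constraint `j` is
violated, under the uniform product measure conditioned on agreeing with the partial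
assignment `X`. -/
noncomputable def condP {n q m : ℕ} (viol : Fin m → (Fin n → Fin q) → Prop)
    (j : Fin m) (X : Fin n → Option (Fin q)) : ℝ :=
  ((Finset.univ.filter fun σ : Fin n → Fin q => Compat X σ ∧ viol j σ).card : ℝ) /
    ((Finset.univ.filter fun σ : Fin n → Fin q => Compat X σ).card : ℝ)

/-- One step of the greedy freezing procedure, processing variable `i`, where the random
seed `ω` prescribes the value a variable receives when it is assigned. The state is a pair
(partial assignment, set of frozen variables). If `i` is frozen it is skipped; otherwise
`i` is assigned the value `ω i`, and every still-unassigned variable lying in a constraint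
that has become dangerous (conditional probability of violation exceeding `p'`) is frozen. -/
noncomputable def greedyStep {n q m : ℕ} (vbl : Fin m → Finset (Fin n))
    (viol : Fin m → (Fin n → Fin q) → Prop) (p' : ℝ) (ω : Fin n → Fin q)
    (st : (Fin n → Option (Fin q)) × Finset (Fin n)) (i : Fin n) :
    (Fin n → Option (Fin q)) × Finset (Fin n) :=
  if i ∈ st.2 then st
  else
    let X' := Function.update st.1 i (some (ω i))
    (X', st.2 ∪ Finset.univ.filter fun v =>
      X' v = none ∧ ∃ j, v ∈ vbl j ∧ p' < condP viol j X')

/-- `greedyRun vbl viol p' ω h` is the state of the greedy freezing procedure with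
parameter `p'` and random seed `ω` after the variables `v_1, …, v_h` (i.e. the first `h`
variables in the fixed order) have been processed: since the procedure always selects the
lowest-indexed available variable, processing the variables in index order — skipping
frozen ones — implements the procedure exactly, and the first component of
`greedyRun vbl viol p' ω h` is the partial assignment `P_{ι(h)}`, where `ι(h)` is the
number of variables among `v_1, …, v_h` that have been assigned values.
In particular `greedyRun vbl viol p' ω n` gives the final partial assignment `P_s`, and
as `ω` ranges uniformly over `Fin n → Fin q`, its law is the distribution `ν`. -/
noncomputable def greedyRun {n q m : ℕ} (vbl : Fin m → Finset (Fin n))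
    (viol : Fin m → (Fin n → Fin q) → Prop) (p' : ℝ) (ω : Fin n → Fin q) :
    ℕ → (Fin n → Option (Fin q)) × Finset (Fin n)
  | 0 => (fun _ => none, ∅)
  | h + 1 =>
    if hh : h < n then greedyStep vbl viol p' ω (greedyRun vbl viol p' ω h) ⟨h, hh⟩
    else greedyRun vbl viol p' ω h

/-- The constraint graph `G(𝒞)`: two distinct constraints are adjacent iff they share a
variable. -/
def constraintGraph {n m : ℕ} (vbl : Fin m → Finset (Fin n)) : SimpleGraph (Fin m) where
  Adj i j := i ≠ j ∧ (vbl i ∩ vbl j).Nonempty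
  symm := by
    constructor
    intro i j hij
    exact ⟨hij.1.symm, by rw [Finset.inter_comm]; exact hij.2⟩
  loopless := by
    constructor
    intro i hi
    exact hi.1 rfl

/-- The graph `G²(𝒞)`: two distinct constraints are adjacent iff their distance in the
constraint graph `G(𝒞)` is at most `2`. -/
def constraintGraphSq {n m : ℕ} (vbl : Fin m → Finset (Fin n)) : SimpleGraph (Fin m) where
  Adj i j := i ≠ j ∧ ((constraintGraph vbl).Adj i j ∨
    ∃ w, (constraintGraph vbl).Adj i w ∧ (constraintGraph vbl).Adj w j)
  symm := by
    constructor
    rintro i j ⟨hne, hadj | ⟨w, hw1, hw2⟩⟩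
    · exact ⟨hne.symm, Or.inl hadj.symm⟩
    · exact ⟨hne.symm, Or.inr ⟨w, hw2.symm, hw1.symm⟩⟩
  loopless := by
    constructor
    intro i hi
    exact hi.1 rfl

/-- `dangerous vbl viol p' ω` is the set `ℱ = ⋃_{i ∈ [s]} ℱ_i` of constraints declared
dangerous at some stage of the greedy freezing procedure with seed `ω`: constraints whose
conditional probability of violation given one of the partial assignments `P_i` (`i ≥ 1`)
of the procedure exceeds `p'`. -/
def dangerous {n q m : ℕ} (vbl : Fin m → Finset (Fin n))
    (viol : Fin m → (Fin n → Fin q) → Prop) (p' : ℝ) (ω : Fin n → Fin q) :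
    Set (Fin m) :=
  {j | ∃ h, 1 ≤ h ∧ h ≤ n ∧ p' < condP viol j (greedyRun vbl viol p' ω h).1}

/-! The product of the conditional probabilities `ℙ[C | P_i]` over a set `T` of constraints
with pairwise disjoint variable sets is a martingale along the procedure, so by Markov's
inequality all constraints of `T` end up dangerous with probability at most `(p / p')^|T|`.
A constraint that becomes dangerous has all its unassigned variables frozen, so it is still
dangerous for the final assignment. A connected set `B` of dangerous constraints in `G²(𝒞)`
contains a `{2,3}`-tree `T` (pairwise variable-disjoint constraints, each one at distance 2
or 3 from an earlier one) with `|B| ≤ |T| (Δ + 1)`. Exploring such a tree depth-first writes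
it as a word of `r - 1` pushes and `r - 1` pops, each push labelled by one of at most
`Δ²(Δ - 1)` neighbours, so there are at most `n (Δ + 1) (4 Δ²(Δ - 1))^(r - 1)` trees of size
`r`, and a union bound over them gives the claim. -/

section CondP

variable {n q m : ℕ} {vbl : Fin m → Finset (Fin n)} {viol : Fin m → (Fin n → Fin q) → Prop}
  {j : Fin m} {X : Fin n → Option (Fin q)} {i : Fin n}

lemma compat_iff_mem_piFinset (X : Fin n → Option (Fin q)) (σ : Fin n → Fin q) :
    Compat X σ ↔ σ ∈ Fintype.piFinset fun v => (X v).elim univ singleton := by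
  simp only [Compat, Fintype.mem_piFinset]
  refine forall_congr' fun v => ?_
  cases X v <;> simp [eq_comm]

lemma card_compat (X : Fin n → Option (Fin q)) :
    #{σ | Compat X σ} = q ^ #{v | X v = none} := by
  rw [filter_congr fun σ _ => compat_iff_mem_piFinset X σ, filter_mem_eq_inter, univ_inter,
    Fintype.card_piFinset, ← prod_const, prod_filter]
  exact prod_congr rfl fun v _ => by cases X v <;> simp

lemma compat_update_iff (hX : X i = none) (a : Fin q) (σ : Fin n → Fin q) :
    Compat (Function.update X i (some a)) σ ↔ Compat X σ ∧ σ i = a := by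
  refine ⟨fun h => ⟨fun v b hv => h v b ?_, h i a (by simp)⟩, fun ⟨h, hi⟩ v b hv => ?_⟩
  · rwa [Function.update_of_ne (by rintro rfl; simp [hX] at hv)]
  · rcases eq_or_ne v i with rfl | hne
    · simp_all
    · exact h v b (by rwa [Function.update_of_ne hne] at hv)

lemma filter_update_some_eq_erase (a : Fin q) :
    ({v | Function.update X i (some a) v = none} : Finset (Fin n))
      = ({v | X v = none} : Finset (Fin n)).erase i := by
  ext v
  by_cases hv : v = i <;> simp [hv]

lemma condP_nonneg (viol : Fin m → (Fin n → Fin q) → Prop) (j : Fin m)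
    (X : Fin n → Option (Fin q)) : 0 ≤ condP viol j X :=
  div_nonneg (Nat.cast_nonneg _) (Nat.cast_nonneg _)

lemma condP_eq_div (viol : Fin m → (Fin n → Fin q) → Prop) (j : Fin m)
    (X : Fin n → Option (Fin q)) :
    condP viol j X = #{σ | Compat X σ ∧ viol j σ} / (q : ℝ) ^ #{v | X v = none} := by
  rw [condP, card_compat, Nat.cast_pow]

lemma sum_card_compat_update (hX : X i = none) :
    ∑ a, #{σ | Compat (Function.update X i (some a)) σ ∧ viol j σ}
      = #{σ | Compat X σ ∧ viol j σ} := by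
  rw [card_eq_sum_card_fiberwise (f := fun σ => σ i) (t := univ) fun _ _ => mem_univ _]
  refine sum_congr rfl fun a _ => congrArg card (ext fun σ => ?_)
  simp [compat_update_iff hX, and_assoc, and_comm (a := σ i = a)]

lemma sum_condP_update (hq : 0 < q) (hX : X i = none) :
    ∑ a, condP viol j (Function.update X i (some a)) = q * condP viol j X := by
  obtain ⟨k, hk⟩ : ∃ k, #{v | X v = none} = k + 1 :=
    Nat.exists_eq_add_one.mpr (card_pos.mpr ⟨i, by simp [hX]⟩)
  have hupd (a : Fin q) : #{v | Function.update X i (some a) v = none} = k := by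
    rw [filter_update_some_eq_erase, card_erase_of_mem (by simp [hX]), hk, Nat.add_sub_cancel]
  simp only [condP_eq_div, hupd, hk, ← sum_div, ← Nat.cast_sum, sum_card_compat_update hX,
    pow_succ]
  field_simp

lemma condP_update_eq_update (hdep : ∀ j, DependsOn (viol j) (vbl j)) (hX : X i = none)
    (hi : i ∉ vbl j) (a b : Fin q) :
    condP viol j (Function.update X i (some a)) = condP viol j (Function.update X i (some b)) := by
  -- swapping the values `a` and `b` at the variable `i` does not affect constraint `j`
  let e : (Fin n → Fin q) ≃ (Fin n → Fin q) :=
    Equiv.piCongrRight fun v => if v = i then Equiv.swap a b else Equiv.refl _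
  have he_ne (σ : Fin n → Fin q) (v : Fin n) (hv : v ≠ i) : e σ v = σ v := by simp [e, hv]
  have hcompat (σ : Fin n → Fin q) :
      Compat (Function.update X i (some a)) σ ↔ Compat (Function.update X i (some b)) (e σ) := by
    simp only [compat_update_iff hX, show e σ i = Equiv.swap a b (σ i) by simp [e],
      Equiv.swap_apply_eq_iff, Equiv.swap_apply_right]
    refine and_congr_left' (forall_congr' fun v => forall_congr' fun c =>
      imp_congr_right fun hv => ?_)
    rw [he_ne σ v (by rintro rfl; simp [hX] at hv)]
  have hviol (σ : Fin n → Fin q) : viol j σ ↔ viol j (e σ) :=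
    Iff.of_eq (hdep j fun v hv => (he_ne σ v (by rintro rfl; exact hi hv)).symm)
  have hnum : #{σ | Compat (Function.update X i (some a)) σ ∧ viol j σ}
      = #{σ | Compat (Function.update X i (some b)) σ ∧ viol j σ} :=
    card_equiv e fun σ => by
      simpa only [mem_filter, mem_univ, true_and] using and_congr (hcompat σ) (hviol σ)
  have hden : #{σ | Compat (Function.update X i (some a)) σ}
      = #{σ | Compat (Function.update X i (some b)) σ} :=
    card_equiv e fun σ => by simpa only [mem_filter, mem_univ, true_and] using hcompat σ
  rw [condP, condP, hnum, hden]

lemma condP_update_of_notMem (hdep : ∀ j, DependsOn (viol j) (vbl j)) (hX : X i = none)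
    (hi : i ∉ vbl j) (a : Fin q) :
    condP viol j (Function.update X i (some a)) = condP viol j X := by
  have h := sum_condP_update (viol := viol) (j := j) a.pos hX
  simp only [condP_update_eq_update hdep hX hi _ a, sum_const, card_univ, Fintype.card_fin,
    nsmul_eq_mul] at h
  exact mul_left_cancel₀ (Nat.cast_ne_zero.mpr a.pos.ne') h

end CondP

section GreedyRun

variable {n q m : ℕ} {vbl : Fin m → Finset (Fin n)} {viol : Fin m → (Fin n → Fin q) → Prop}
  {p' : ℝ} {ω : Fin n → Fin q} {j : Fin m}

lemma greedyRun_succ_of_lt {h : ℕ} (hh : h < n) :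
    greedyRun vbl viol p' ω (h + 1)
      = greedyStep vbl viol p' ω (greedyRun vbl viol p' ω h) ⟨h, hh⟩ := by
  rw [greedyRun, dif_pos hh]

lemma greedyRun_succ_of_le {h : ℕ} (hh : n ≤ h) :
    greedyRun vbl viol p' ω (h + 1) = greedyRun vbl viol p' ω h := by
  rw [greedyRun, dif_neg hh.not_gt]

lemma greedyStep_of_mem {st : (Fin n → Option (Fin q)) × Finset (Fin n)} {i : Fin n}
    (hi : i ∈ st.2) : greedyStep vbl viol p' ω st i = st :=
  if_pos hi

lemma greedyStep_fst_of_notMem {st : (Fin n → Option (Fin q)) × Finset (Fin n)} {i : Fin n}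
    (hi : i ∉ st.2) :
    (greedyStep vbl viol p' ω st i).1 = Function.update st.1 i (some (ω i)) := by
  rw [greedyStep, if_neg hi]

lemma greedyRun_fst_eq_none {h : ℕ} {v : Fin n} (hv : h ≤ v) :
    (greedyRun vbl viol p' ω h).1 v = none := by
  induction h with
  | zero => rfl
  | succ h ih =>
    rcases lt_or_ge h n with hh | hh
    · rw [greedyRun_succ_of_lt hh]
      by_cases hf : ⟨h, hh⟩ ∈ (greedyRun vbl viol p' ω h).2
      · rw [greedyStep_of_mem hf]; exact ih (by omega)
      · rw [greedyStep_fst_of_notMem hf, Function.update_of_ne (by rintro rfl; simp at hv)]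
        exact ih (by omega)
    · rw [greedyRun_succ_of_le hh]; exact ih (by omega)

lemma greedyRun_congr {ω ω' : Fin n → Fin q} {h : ℕ} (hω : ∀ i : Fin n, i < h → ω i = ω' i) :
    greedyRun vbl viol p' ω h = greedyRun vbl viol p' ω' h := by
  induction h with
  | zero => rfl
  | succ h ih =>
    rcases lt_or_ge h n with hh | hh
    · rw [greedyRun_succ_of_lt hh, greedyRun_succ_of_lt hh, ih fun i hi => hω i (by omega),
        greedyStep, greedyStep, hω ⟨h, hh⟩ (by simp)]
    · rw [greedyRun_succ_of_le hh, greedyRun_succ_of_le hh, ih fun i hi => hω i (by omega)]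

def Settled (vbl : Fin m → Finset (Fin n)) (j : Fin m)
    (st : (Fin n → Option (Fin q)) × Finset (Fin n)) : Prop :=
  ∀ v ∈ vbl j, st.1 v ≠ none ∨ v ∈ st.2

lemma Settled.step (hdep : ∀ j, DependsOn (viol j) (vbl j))
    {st : (Fin n → Option (Fin q)) × Finset (Fin n)} {i : Fin n} (hs : Settled vbl j st)
    (hi : st.1 i = none) :
    Settled vbl j (greedyStep vbl viol p' ω st i) ∧
      condP viol j (greedyStep vbl viol p' ω st i).1 = condP viol j st.1 := by
  by_cases hf : i ∈ st.2
  · rw [greedyStep_of_mem hf]; exact ⟨hs, rfl⟩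
  have hij : i ∉ vbl j := fun hmem => (hs i hmem).elim (· hi) hf
  simp only [greedyStep, if_neg hf]
  refine ⟨fun v hv => ?_, condP_update_of_notMem hdep hi hij _⟩
  dsimp only
  rw [Function.update_of_ne (by rintro rfl; exact hij hv)]
  exact (hs v hv).imp_right fun h => mem_union_left _ h

lemma Settled.condP_greedyRun_eq (hdep : ∀ j, DependsOn (viol j) (vbl j)) {h h' : ℕ}
    (hs : Settled vbl j (greedyRun vbl viol p' ω h)) (hh : h ≤ h') :
    condP viol j (greedyRun vbl viol p' ω h').1 = condP viol j (greedyRun vbl viol p' ω h).1 := by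
  suffices Settled vbl j (greedyRun vbl viol p' ω h') ∧
      condP viol j (greedyRun vbl viol p' ω h').1 = condP viol j (greedyRun vbl viol p' ω h).1
    from this.2
  induction h', hh using Nat.le_induction with
  | base => exact ⟨hs, rfl⟩
  | succ k _ ih =>
    rcases lt_or_ge k n with hk | hk
    · rw [greedyRun_succ_of_lt hk]
      obtain ⟨hs', heq⟩ := ih.1.step hdep (greedyRun_fst_eq_none (v := ⟨k, hk⟩) le_rfl)
      exact ⟨hs', heq.trans ih.2⟩
    · rw [greedyRun_succ_of_le hk]; exact ih

lemma settled_of_lt_condP (hbase : condP viol j (fun _ => none) ≤ p') {h : ℕ}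
    (hd : p' < condP viol j (greedyRun vbl viol p' ω h).1) :
    Settled vbl j (greedyRun vbl viol p' ω h) := by
  induction h with
  | zero => exact absurd hd hbase.not_gt
  | succ h ih =>
    rcases lt_or_ge h n with hh | hh
    · rw [greedyRun_succ_of_lt hh] at hd ⊢
      by_cases hf : ⟨h, hh⟩ ∈ (greedyRun vbl viol p' ω h).2
      · rw [greedyStep_of_mem hf] at hd ⊢; exact ih hd
      simp only [greedyStep, if_neg hf] at hd ⊢
      intro v hv
      by_cases hnone :
          Function.update (greedyRun vbl viol p' ω h).1 ⟨h, hh⟩ (some (ω ⟨h, hh⟩)) v = none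
      · exact Or.inr (mem_union_right _ (mem_filter.mpr ⟨mem_univ _, hnone, j, hv, hd⟩))
      · exact Or.inl hnone
    · rw [greedyRun_succ_of_le hh] at hd ⊢; exact ih hd

lemma lt_condP_final_of_mem_dangerous (hdep : ∀ j, DependsOn (viol j) (vbl j))
    (hbase : condP viol j (fun _ => none) ≤ p') (hj : j ∈ dangerous vbl viol p' ω) :
    p' < condP viol j (greedyRun vbl viol p' ω n).1 := by
  obtain ⟨h, -, hn, hd⟩ := hj
  rwa [(settled_of_lt_condP hbase hd).condP_greedyRun_eq hdep hn]

lemma vbl_nonempty_of_mem_dangerous (hdep : ∀ j, DependsOn (viol j) (vbl j))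
    (hbase : condP viol j (fun _ => none) ≤ p') (hj : j ∈ dangerous vbl viol p' ω) :
    (vbl j).Nonempty := by
  by_contra hempty
  obtain ⟨h, -, -, hd⟩ := hj
  have hs : Settled vbl j (greedyRun vbl viol p' ω 0) := by
    simp [Settled, not_nonempty_iff_eq_empty.mp hempty]
  rw [hs.condP_greedyRun_eq hdep (Nat.zero_le h)] at hd
  exact hbase.not_gt hd

end GreedyRun

lemma sum_sum_update {ι β M : Type*} [Fintype ι] [DecidableEq ι] [Fintype β]
    [AddCommMonoid M] (f : (ι → β) → M) (i : ι) :
    ∑ ω, ∑ b, f (Function.update ω i b) = Fintype.card β • ∑ ω, f ω := by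
  have hupd (a b : β) (g : {j // j ≠ i} → β) : Function.update
      ((Equiv.funSplitAt i β).symm (a, g)) i b = (Equiv.funSplitAt i β).symm (b, g) := by
    ext v
    by_cases hv : v = i
    · subst hv; simp
    · simp [hv]
  rw [← (Equiv.funSplitAt i β).symm.sum_comp, ← (Equiv.funSplitAt i β).symm.sum_comp,
    Fintype.sum_prod_type, Fintype.sum_prod_type]
  simp only [hupd, sum_const, card_univ, smul_sum]
  exact sum_comm

section Martingale

variable {n q m : ℕ} {vbl : Fin m → Finset (Fin n)} {viol : Fin m → (Fin n → Fin q) → Prop}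
  {p' : ℝ} {T : Finset (Fin m)}

lemma sum_prod_condP_update (hq : 0 < q) (hdep : ∀ j, DependsOn (viol j) (vbl j))
    (hT : (T : Set (Fin m)).PairwiseDisjoint vbl) {X : Fin n → Option (Fin q)} {i : Fin n}
    (hX : X i = none) :
    ∑ a, ∏ j ∈ T, condP viol j (Function.update X i (some a)) = q * ∏ j ∈ T, condP viol j X := by
  by_cases hi : ∃ j₀ ∈ T, i ∈ vbl j₀
  · obtain ⟨j₀, hj₀, hij₀⟩ := hi
    have hothers (a : Fin q) : ∏ j ∈ T.erase j₀, condP viol j (Function.update X i (some a))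
        = ∏ j ∈ T.erase j₀, condP viol j X :=
      prod_congr rfl fun j hj => condP_update_of_notMem hdep hX (fun hij => disjoint_left.mp
        (hT (mem_coe.2 (mem_of_mem_erase hj)) (mem_coe.2 hj₀) (ne_of_mem_erase hj)) hij hij₀) a
    simp only [← mul_prod_erase T _ hj₀, hothers, ← sum_mul, sum_condP_update hq hX, mul_assoc]
  · simp only [not_exists, not_and] at hi
    rw [sum_congr rfl fun a _ => prod_congr rfl fun j hj =>
      condP_update_of_notMem hdep hX (hi j hj) a]
    simp

lemma sum_update_prod_condP_greedyRun_succ (hq : 0 < q) (hdep : ∀ j, DependsOn (viol j) (vbl j))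
    (hT : (T : Set (Fin m)).PairwiseDisjoint vbl) (ω : Fin n → Fin q) {h : ℕ} (hh : h < n) :
    ∑ a, ∏ j ∈ T, condP viol j (greedyRun vbl viol p' (Function.update ω ⟨h, hh⟩ a) (h + 1)).1
      = q * ∏ j ∈ T, condP viol j (greedyRun vbl viol p' ω h).1 := by
  have hprev (a : Fin q) : greedyRun vbl viol p' (Function.update ω ⟨h, hh⟩ a) h
      = greedyRun vbl viol p' ω h :=
    greedyRun_congr fun i hi => Function.update_of_ne (by rintro rfl; simp at hi) _ _
  simp only [greedyRun_succ_of_lt hh, hprev]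
  by_cases hf : ⟨h, hh⟩ ∈ (greedyRun vbl viol p' ω h).2
  · simp [greedyStep_of_mem hf]
  · simp only [greedyStep_fst_of_notMem hf, Function.update_self]
    exact sum_prod_condP_update hq hdep hT (greedyRun_fst_eq_none le_rfl)

lemma sum_prod_condP_greedyRun (hq : 0 < q) (hdep : ∀ j, DependsOn (viol j) (vbl j))
    (hT : (T : Set (Fin m)).PairwiseDisjoint vbl) (h : ℕ) :
    ∑ ω, ∏ j ∈ T, condP viol j (greedyRun vbl viol p' ω h).1
      = q ^ n * ∏ j ∈ T, condP viol j (fun _ => none) := by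
  induction h with
  | zero => simp [greedyRun]
  | succ h ih =>
    rcases lt_or_ge h n with hh | hh
    · have key := sum_sum_update
        (fun ω => ∏ j ∈ T, condP viol j (greedyRun vbl viol p' ω (h + 1)).1) ⟨h, hh⟩
      simp only [sum_update_prod_condP_greedyRun_succ hq hdep hT _ hh, ← mul_sum, ih,
        Fintype.card_fin, nsmul_eq_mul] at key
      exact mul_left_cancel₀ (Nat.cast_ne_zero.mpr hq.ne') key.symm
    · simp only [greedyRun_succ_of_le hh, ih]

noncomputable def dangerousAtEnd (vbl : Fin m → Finset (Fin n))
    (viol : Fin m → (Fin n → Fin q) → Prop) (p' : ℝ) (T : Finset (Fin m)) :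
    Finset (Fin n → Fin q) :=
  {ω | ∀ j ∈ T, p' < condP viol j (greedyRun vbl viol p' ω n).1}

lemma card_dangerousAtEnd_le (hq : 0 < q) (hdep : ∀ j, DependsOn (viol j) (vbl j))
    (hT : (T : Set (Fin m)).PairwiseDisjoint vbl) (hTne : T.Nonempty) (hp' : 0 < p') {p c : ℝ}
    (hp : ∀ j, condP viol j (fun _ => none) ≤ p) (hpc : p ≤ p' * c) :
    (#(dangerousAtEnd vbl viol p' T) : ℝ) ≤ q ^ n * c ^ #T := by
  have hp0 : 0 ≤ p := (condP_nonneg viol _ _).trans (hp hTne.choose)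
  have markov : #(dangerousAtEnd vbl viol p' T) * p' ^ #T ≤ (q : ℝ) ^ n * p ^ #T :=
    calc #(dangerousAtEnd vbl viol p' T) * p' ^ #T
        = ∑ ω ∈ dangerousAtEnd vbl viol p' T, ∏ _j ∈ T, p' := by simp
      _ ≤ ∑ ω ∈ dangerousAtEnd vbl viol p' T,
            ∏ j ∈ T, condP viol j (greedyRun vbl viol p' ω n).1 :=
          sum_le_sum fun ω hω => prod_le_prod (fun _ _ => hp'.le)
            fun j hj => ((mem_filter.mp hω).2 j hj).le
      _ ≤ ∑ ω, ∏ j ∈ T, condP viol j (greedyRun vbl viol p' ω n).1 :=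
          sum_le_sum_of_subset_of_nonneg (subset_univ _)
            fun _ _ _ => prod_nonneg fun _ _ => condP_nonneg viol _ _
      _ = q ^ n * ∏ j ∈ T, condP viol j (fun _ => none) := sum_prod_condP_greedyRun hq hdep hT n
      _ ≤ q ^ n * p ^ #T := by
          rw [← prod_const]
          exact mul_le_mul_of_nonneg_left
            (prod_le_prod (fun _ _ => condP_nonneg viol _ _) fun j _ => hp j) (by positivity)
  refine le_of_mul_le_mul_right ?_ (pow_pos hp' #T)
  calc _ ≤ (q : ℝ) ^ n * p ^ #T := markov
    _ ≤ q ^ n * (p' * c) ^ #T := by gcongr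
    _ = q ^ n * c ^ #T * p' ^ #T := by ring

end Martingale

section Exploration

variable {α : Type*} [DecidableEq α] {D : ℕ}

inductive Linked (R : α → α → Prop) (j₀ : α) : Finset α → Prop
  | root : Linked R j₀ {j₀}
  | insert {T : Finset α} {t x : α} :
      Linked R j₀ T → t ∈ T → R t x → x ∉ T → Linked R j₀ (insert x T)

namespace Linked

variable {R : α → α → Prop} {j₀ : α} {T : Finset α}

lemma root_mem (h : Linked R j₀ T) : j₀ ∈ T := by
  induction h with
  | root => exact mem_singleton_self _
  | insert _ _ _ _ ih => exact mem_insert_of_mem ih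

lemma exists_subset_card_eq (h : Linked R j₀ T) {r : ℕ} (hr : 1 ≤ r) (hrT : r ≤ #T) :
    ∃ T' ⊆ T, Linked R j₀ T' ∧ #T' = r := by
  induction h with
  | root => exact ⟨{j₀}, subset_rfl, root, by simp_all; omega⟩
  | @insert T t x hT ht hx hxT ih =>
    rw [card_insert_of_notMem hxT] at hrT
    rcases hrT.lt_or_eq with hlt | heq
    · obtain ⟨T', hT', hlink, hcard⟩ := ih (by omega)
      exact ⟨T', hT'.trans (subset_insert _ _), hlink, hcard⟩
    · exact ⟨_, subset_rfl, hT.insert ht hx hxT, by rw [card_insert_of_notMem hxT, heq]⟩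

end Linked

def exploreStep (nb : α → List α) : List α → Option (Fin D) → List α
  | [], _ => []
  | _ :: s, none => s
  | t :: s, some k => ((nb t)[k.1]?).elim (t :: s) (· :: t :: s)

def visited (nb : α → List α) : List (Option (Fin D)) → List α → Finset α
  | [], s => s.head?.toFinset
  | c :: w, s => s.head?.toFinset ∪ visited nb w (exploreStep nb s c)

variable {nb : α → List α}

lemma head_subset_visited (w : List (Option (Fin D))) (s : List α) :
    s.head?.toFinset ⊆ visited nb w s := by
  cases w <;> simp [visited]

lemma visited_append (w₁ w₂ : List (Option (Fin D))) (s : List α) :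
    visited nb (w₁ ++ w₂) s = visited nb w₁ s ∪ visited nb w₂ (w₁.foldl (exploreStep nb) s) := by
  induction w₁ generalizing s with
  | nil => simp [visited, union_eq_right.mpr (head_subset_visited w₂ s)]
  | cons c w₁ ih => simp [visited, ih, union_assoc]

lemma exists_append_of_mem_visited {w : List (Option (Fin D))} {s : List α} {y : α}
    (hy : y ∈ visited nb w s) :
    ∃ w₁ w₂, w = w₁ ++ w₂ ∧ (w₁.foldl (exploreStep nb) s).head? = some y := by
  induction w generalizing s with
  | nil => exact ⟨[], [], rfl, by simpa [visited] using hy⟩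
  | cons c w ih =>
    rcases mem_union.mp hy with hy | hy
    · exact ⟨[], c :: w, rfl, by simpa using hy⟩
    · obtain ⟨w₁, w₂, rfl, hw₁⟩ := ih hy
      exact ⟨c :: w₁, w₂, rfl, hw₁⟩

lemma foldl_excursion {t x : α} (hx : x ∈ nb t) (hk : (nb t).idxOf x < D) (s : List α) :
    [some ⟨_, hk⟩, none].foldl (exploreStep nb) (t :: s) = t :: s := by
  simp [exploreStep, List.getElem?_idxOf hx]

lemma visited_excursion {t x : α} (hx : x ∈ nb t) (hk : (nb t).idxOf x < D) (s : List α) :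
    visited nb [some ⟨_, hk⟩, none] (t :: s) = {t, x} := by
  ext y
  simp [visited, exploreStep, List.getElem?_idxOf hx, or_comm]

lemma Linked.exists_word {R : α → α → Prop} {j₀ : α} {T : Finset α}
    (hR : ∀ t x, R t x → x ∈ nb t) (hD : ∀ t, (nb t).length ≤ D) (h : Linked R j₀ T) :
    ∃ w : List (Option (Fin D)), visited nb w [j₀] = T ∧ w.length = 2 * (#T - 1) ∧
      (w.filterMap id).length = #T - 1 := by
  induction h with
  | root => exact ⟨[], by simp [visited], by simp, by simp⟩
  | @insert T t x hT ht hx hxT ih =>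
    -- insert the excursion "push `x`, pop" at a moment when `t` is on top of the stack
    obtain ⟨w, hvis, hlen, hlab⟩ := ih
    obtain ⟨w₁, w₂, rfl, htop⟩ :=
      exists_append_of_mem_visited (hvis ▸ ht : t ∈ visited nb w [j₀])
    obtain ⟨s, hs⟩ : ∃ s, w₁.foldl (exploreStep nb) [j₀] = t :: s := by
      cases h : w₁.foldl (exploreStep nb) [j₀] <;> simp_all
    have hxnb := hR t x hx
    have hk : (nb t).idxOf x < D := (List.idxOf_lt_length_iff.mpr hxnb).trans_le (hD t)
    have hT1 := card_pos.mpr ⟨j₀, hT.root_mem⟩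
    refine ⟨w₁ ++ ([some ⟨_, hk⟩, none] ++ w₂), ?_, ?_, ?_⟩
    · rw [← hvis, visited_append, visited_append, visited_append, hs,
        foldl_excursion hxnb, visited_excursion hxnb]
      have := head_subset_visited (nb := nb) w₂ (t :: s)
      ext y
      simp only [mem_union, mem_insert, mem_singleton]
      aesop
    · simp only [List.length_append, List.length_cons, List.length_nil,
        card_insert_of_notMem hxT] at hlen ⊢
      omega
    · rw [List.filterMap_append, List.length_append] at hlab
      rw [List.filterMap_append, List.filterMap_append, List.length_append, List.length_append,
        show ([some ⟨_, hk⟩, none] : List (Option (Fin D))).filterMap id = [⟨_, hk⟩] from rfl,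
        List.length_singleton, card_insert_of_notMem hxT]
      omega

def fillSome {β : Type*} : List Bool → List β → List (Option β)
  | [], _ => []
  | false :: bs, ls => none :: fillSome bs ls
  | true :: bs, l :: ls => some l :: fillSome bs ls
  | true :: _, [] => []

lemma fillSome_map_isSome_filterMap {β : Type*} (w : List (Option β)) :
    fillSome (w.map Option.isSome) (w.filterMap id) = w := by
  induction w with
  | nil => rfl
  | cons c w ih => cases c <;> exact congrArg _ ih

theorem card_linked_le [Fintype α] (R : α → α → Prop) (hD : ∀ t, #{x | R t x} ≤ D) (j₀ : α)
    (r : ℕ) : #{T : Finset α | Linked R j₀ T ∧ #T = r} ≤ (4 * D) ^ (r - 1) := by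
  let nb (t : α) : List α := ({x | R t x} : Finset α).toList
  -- an exploration word is determined by its push/pop pattern and its push labels
  let decode (bl : List.Vector Bool (2 * (r - 1)) × List.Vector (Fin D) (r - 1)) : Finset α :=
    visited nb (fillSome bl.1.1 bl.2.1) [j₀]
  calc #{T : Finset α | Linked R j₀ T ∧ #T = r}
      ≤ #(univ.image decode) := card_le_card fun T hT => by
        obtain ⟨hlink, rfl⟩ := (mem_filter.mp hT).2
        obtain ⟨w, hvis, hlen, hlab⟩ := hlink.exists_word (nb := nb)
          (fun t x h => by simp [nb, h]) (fun t => by simpa [nb] using hD t)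
        exact mem_image.mpr ⟨(⟨w.map Option.isSome, by simpa using hlen⟩, ⟨w.filterMap id, hlab⟩),
          mem_univ _, (congrArg (visited nb · [j₀]) (fillSome_map_isSome_filterMap w)).trans hvis⟩
    _ ≤ (4 * D) ^ (r - 1) := card_image_le.trans (by simp [card_vector, mul_pow, pow_mul])

end Exploration

lemma SimpleGraph.Connected.subset_of_closed {V : Type*} {G : SimpleGraph V} {B S : Set V}
    (hconn : (G.induce B).Connected)
    (hclosed : ∀ x ∈ B, ∀ y ∈ B, x ∈ S → G.Adj x y → y ∈ S) {b₀ : V} (hb₀ : b₀ ∈ B)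
    (hb₀S : b₀ ∈ S) : B ⊆ S := by
  have key (x : B) (hx : Relation.ReflTransGen (G.induce B).Adj ⟨b₀, hb₀⟩ x) : (x : V) ∈ S := by
    induction hx with
    | refl => exact hb₀S
    | tail _ hxy ih => exact hclosed _ (Subtype.prop _) _ (Subtype.prop _) ih hxy
  exact fun b hb => key ⟨b, hb⟩ ((SimpleGraph.reachable_iff_reflTransGen _ _).mp
    (hconn.preconnected ⟨b₀, hb₀⟩ ⟨b, hb⟩))

lemma SimpleGraph.card_le_of_nonbacktracking {V : Type*} [Fintype V] (G : SimpleGraph V)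
    [DecidableRel G.Adj] {Δ : ℕ} (hdeg : ∀ v, G.degree v ≤ Δ) (j : V) {s : Finset V}
    (hs : ∀ k ∈ s, ∃ w, G.Adj j w ∧ ((G.Adj w k ∧ k ≠ j) ∨
      ∃ w', G.Adj w w' ∧ w' ≠ j ∧ G.Adj w' k ∧ k ≠ w)) : #s ≤ Δ * (Δ - 1) * Δ := by
  have hback {v w : V} (h : G.Adj v w) : #((G.neighborFinset w).erase v) ≤ Δ - 1 := by
    rw [card_erase_of_mem (by simpa using h.symm), card_neighborFinset_eq_degree]
    exact Nat.sub_le_sub_right (hdeg w) 1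
  calc _ ≤ #((G.neighborFinset j).biUnion fun w => (G.neighborFinset w).erase j ∪
          ((G.neighborFinset w).erase j).biUnion fun w' => (G.neighborFinset w').erase w) := by
        refine card_le_card fun k hk => ?_
        obtain ⟨w, hjw, ⟨hwk, hkj⟩ | ⟨w', hww', hw'j, hw'k, hkw⟩⟩ := hs k hk
        · exact mem_biUnion.mpr ⟨w, by simpa using hjw, mem_union_left _ (by simp [hwk, hkj])⟩
        · exact mem_biUnion.mpr ⟨w, by simpa using hjw, mem_union_right _
            (mem_biUnion.mpr ⟨w', by simp [hww', hw'j], by simp [hw'k, hkw]⟩)⟩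
    _ ≤ #(G.neighborFinset j) * ((Δ - 1) + (Δ - 1) * (Δ - 1)) := by
        refine card_biUnion_le_card_mul _ _ _ fun w hw => (card_union_le _ _).trans ?_
        have hjw : G.Adj j w := by simpa using hw
        refine add_le_add (hback hjw) ((card_biUnion_le_card_mul _ _ _ fun w' hw' =>
          hback ((G.mem_neighborFinset _ _).mp (mem_of_mem_erase hw'))).trans ?_)
        exact Nat.mul_le_mul_right _ (hback hjw)
    _ ≤ Δ * (Δ - 1) * Δ := by
        have h : Δ - 1 + (Δ - 1) * (Δ - 1) = (Δ - 1) * Δ := by cases Δ <;> simp; ring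
        rw [card_neighborFinset_eq_degree, h, mul_assoc]
        exact Nat.mul_le_mul_right _ (hdeg j)

section ConstraintGraph

variable {n m : ℕ} {vbl : Fin m → Finset (Fin n)} {Δ : ℕ}

lemma constraintGraph_adj {i j : Fin m} :
    (constraintGraph vbl).Adj i j ↔ i ≠ j ∧ (vbl i ∩ vbl j).Nonempty := Iff.rfl

lemma not_disjoint_of_constraintGraph_adj {i j : Fin m} (h : (constraintGraph vbl).Adj i j) :
    ¬Disjoint (vbl i) (vbl j) :=
  disjoint_iff_inter_eq_empty.not.mpr h.2.ne_empty

lemma disjoint_of_not_constraintGraph_adj {i j : Fin m}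
    (h : ¬(j = i ∨ (constraintGraph vbl).Adj i j)) : Disjoint (vbl i) (vbl j) := by
  simp only [constraintGraph_adj, not_or, not_and, not_nonempty_iff_eq_empty] at h
  exact disjoint_iff_inter_eq_empty.mpr (h.2 (Ne.symm h.1))

lemma degree_constraintGraph_le
    (hdeg : ∀ i : Fin m, (#{j | j ≠ i ∧ (vbl i ∩ vbl j).Nonempty} : ℝ) ≤ Δ) (i : Fin m) :
    (constraintGraph vbl).degree i ≤ Δ := by
  have hnbr : (constraintGraph vbl).neighborFinset i
      = ({j | j ≠ i ∧ (vbl i ∩ vbl j).Nonempty} : Finset (Fin m)) := by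
    ext j
    simp [constraintGraph_adj, ne_comm]
  rw [← SimpleGraph.card_neighborFinset_eq_degree, hnbr]
  exact_mod_cast hdeg i

def twoThreeAdj (vbl : Fin m → Finset (Fin n)) (j k : Fin m) : Prop :=
  Disjoint (vbl j) (vbl k) ∧ ∃ w, (constraintGraph vbl).Adj j w ∧
    ((constraintGraph vbl).Adj w k ∨
      ∃ w', (constraintGraph vbl).Adj w w' ∧ (constraintGraph vbl).Adj w' k)

lemma card_twoThreeAdj_le (hdeg : ∀ i, (constraintGraph vbl).degree i ≤ Δ) (j : Fin m) :
    #{k | twoThreeAdj vbl j k} ≤ Δ * (Δ - 1) * Δ := by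
  refine (constraintGraph vbl).card_le_of_nonbacktracking hdeg j fun k hk => ?_
  obtain ⟨hdisj, w, hjw, hwk | ⟨w', hww', hw'k⟩⟩ := (mem_filter.mp hk).2
  · refine ⟨w, hjw, Or.inl ⟨hwk, ?_⟩⟩
    rintro rfl
    exact not_disjoint_of_constraintGraph_adj hjw (disjoint_self.mp hdisj ▸ disjoint_bot_left)
  · refine ⟨w, hjw, Or.inr ⟨w', hww', ?_, hw'k, ?_⟩⟩
    · rintro rfl
      exact not_disjoint_of_constraintGraph_adj hw'k hdisj
    · rintro rfl
      exact not_disjoint_of_constraintGraph_adj hjw hdisj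

lemma twoThreeAdj_of_constraintGraphSq_adj {s t x : Fin m}
    (hts : s = t ∨ (constraintGraph vbl).Adj t s) (hsx : (constraintGraphSq vbl).Adj s x)
    (hdisj : Disjoint (vbl t) (vbl x)) : twoThreeAdj vbl t x := by
  obtain ⟨-, hsx | ⟨w, hsw, hwx⟩⟩ := hsx
  · rcases hts with rfl | hts
    · exact absurd hdisj (not_disjoint_of_constraintGraph_adj hsx)
    · exact ⟨hdisj, s, hts, Or.inl hsx⟩
  · rcases hts with rfl | hts
    · exact ⟨hdisj, w, hsw, Or.inl hwx⟩
    · exact ⟨hdisj, s, hts, Or.inr ⟨w, hsw, hwx⟩⟩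

lemma exists_linked_twoThreeAdj (hdeg : ∀ i, (constraintGraph vbl).degree i ≤ Δ)
    {B : Finset (Fin m)} (hconn : ((constraintGraphSq vbl).induce (B : Set (Fin m))).Connected)
    {b₀ : Fin m} (hb₀ : b₀ ∈ B) :
    ∃ T ⊆ B, Linked (twoThreeAdj vbl) b₀ T ∧ (T : Set (Fin m)).PairwiseDisjoint vbl ∧
      #B ≤ #T * (Δ + 1) := by
  let F := B.powerset.filter fun T =>
    Linked (twoThreeAdj vbl) b₀ T ∧ (T : Set (Fin m)).PairwiseDisjoint vbl
  obtain ⟨T, hTF, hmax⟩ := F.exists_max_image card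
    ⟨{b₀}, mem_filter.mpr ⟨by simpa using hb₀, Linked.root, by simp⟩⟩
  obtain ⟨hTB, hlink, hdisj⟩ : T ⊆ B ∧ Linked (twoThreeAdj vbl) b₀ T ∧
      (T : Set (Fin m)).PairwiseDisjoint vbl := by simpa [F, and_assoc] using hTF
  let S := T.biUnion fun t => insert t ((constraintGraph vbl).neighborFinset t)
  have hmemS {x : Fin m} : x ∈ S ↔ ∃ t ∈ T, x = t ∨ (constraintGraph vbl).Adj t x := by
    simp [S]
  -- a constraint of `B` outside `S` but close to `S` could be added to the maximal tree `T`
  have hclosed : ∀ x ∈ (B : Set (Fin m)), ∀ y ∈ (B : Set (Fin m)), x ∈ (S : Set (Fin m)) →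
      (constraintGraphSq vbl).Adj x y → y ∈ (S : Set (Fin m)) := by
    intro x _ y hy hx hxy
    by_contra hyS
    obtain ⟨t, ht, hxt⟩ := hmemS.mp hx
    have hfar (t' : Fin m) (ht' : t' ∈ T) : Disjoint (vbl t') (vbl y) :=
      disjoint_of_not_constraintGraph_adj fun h => hyS (hmemS.mpr ⟨t', ht', h⟩)
    have hyT : y ∉ T := fun h => hyS (hmemS.mpr ⟨y, h, Or.inl rfl⟩)
    have hins : insert y T ∈ F := mem_filter.mpr ⟨mem_powerset.mpr (insert_subset hy hTB),
      hlink.insert ht (twoThreeAdj_of_constraintGraphSq_adj hxt hxy (hfar t ht)) hyT, by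
        rw [coe_insert]
        exact hdisj.insert fun t' ht' _ => (hfar t' ht').symm⟩
    exact (hmax _ hins).not_gt (by simp [card_insert_of_notMem hyT])
  have hBS : B ⊆ S := by
    exact_mod_cast hconn.subset_of_closed hclosed (mem_coe.mpr hb₀)
      (mem_coe.mpr (hmemS.mpr ⟨b₀, hlink.root_mem, Or.inl rfl⟩))
  refine ⟨T, hTB, hlink, hdisj,
    (card_le_card hBS).trans (card_biUnion_le_card_mul _ _ _ fun t _ => ?_)⟩
  exact (card_insert_le _ _).trans (by
    rw [SimpleGraph.card_neighborFinset_eq_degree]; exact Nat.add_le_add_right (hdeg t) 1)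

lemma card_filter_mem_vbl_le (hdeg : ∀ i, (constraintGraph vbl).degree i ≤ Δ) (v : Fin n) :
    #{j | v ∈ vbl j} ≤ Δ + 1 := by
  rcases ({j | v ∈ vbl j} : Finset (Fin m)).eq_empty_or_nonempty with h | ⟨j₀, hj₀⟩
  · simp [h]
  refine (card_le_card fun j hj => ?_).trans
    ((card_insert_le j₀ ((constraintGraph vbl).neighborFinset j₀)).trans
    (by rw [SimpleGraph.card_neighborFinset_eq_degree]; exact Nat.add_le_add_right (hdeg j₀) 1))
  rcases eq_or_ne j j₀ with rfl | hne
  · exact mem_insert_self _ _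
  · refine mem_insert_of_mem ((SimpleGraph.mem_neighborFinset _ _ _).mpr ⟨hne.symm, v, ?_⟩)
    simp_all

lemma card_filter_vbl_nonempty_le (hdeg : ∀ i, (constraintGraph vbl).degree i ≤ Δ) :
    #{j | (vbl j).Nonempty} ≤ n * (Δ + 1) := by
  calc #{j | (vbl j).Nonempty} ≤ #(univ.biUnion fun v : Fin n => {j | v ∈ vbl j}) :=
        card_le_card fun j hj => by
          obtain ⟨v, hv⟩ := (mem_filter.mp hj).2
          exact mem_biUnion.mpr ⟨v, mem_univ _, by simpa using hv⟩
    _ ≤ n * (Δ + 1) := (card_biUnion_le_card_mul univ _ _ fun v _ =>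
          card_filter_mem_vbl_le hdeg v).trans_eq (by simp)

noncomputable def twoThreeTrees (vbl : Fin m → Finset (Fin n)) (r : ℕ) :
    Finset (Finset (Fin m)) :=
  {T | #T = r ∧ (T : Set (Fin m)).PairwiseDisjoint vbl ∧
    ∃ j₀, (vbl j₀).Nonempty ∧ Linked (twoThreeAdj vbl) j₀ T}

lemma card_twoThreeTrees_le (hdeg : ∀ i, (constraintGraph vbl).degree i ≤ Δ) (r : ℕ) :
    #(twoThreeTrees vbl r) ≤ n * (Δ + 1) * (4 * (Δ * (Δ - 1) * Δ)) ^ (r - 1) := by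
  calc #(twoThreeTrees vbl r)
      ≤ #(({j | (vbl j).Nonempty} : Finset (Fin m)).biUnion fun j₀ =>
          ({T | Linked (twoThreeAdj vbl) j₀ T ∧ #T = r} : Finset (Finset (Fin m)))) :=
        card_le_card fun T hT => by
          obtain ⟨hr, -, j₀, hj₀, hlink⟩ := (mem_filter.mp hT).2
          simpa using ⟨j₀, hj₀, hlink, hr⟩
    _ ≤ _ := (card_biUnion_le_card_mul _ _ _ fun j₀ _ =>
          card_linked_le _ (card_twoThreeAdj_le hdeg) j₀ r).trans
        (Nat.mul_le_mul_right _ (card_filter_vbl_nonempty_le hdeg))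

lemma exists_subset_mem_twoThreeTrees (hdeg : ∀ i, (constraintGraph vbl).degree i ≤ Δ)
    {B : Finset (Fin m)} (hconn : ((constraintGraphSq vbl).induce (B : Set (Fin m))).Connected)
    (hne : ∀ j ∈ B, (vbl j).Nonempty) {L : ℝ} (hL : L ≤ #B) :
    ∃ T ⊆ B, T ∈ twoThreeTrees vbl (max 1 ⌈L / (Δ + 1)⌉₊) := by
  obtain ⟨⟨b₀, hb₀⟩⟩ := hconn.nonempty
  obtain ⟨T₀, hT₀B, hlink, hdisj, hcard⟩ := exists_linked_twoThreeAdj hdeg hconn hb₀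
  have hr : max 1 ⌈L / (Δ + 1)⌉₊ ≤ #T₀ := by
    refine max_le (card_pos.mpr ⟨b₀, hlink.root_mem⟩) (Nat.ceil_le.mpr ?_)
    rw [div_le_iff₀ (by positivity)]
    exact hL.trans (by exact_mod_cast hcard)
  obtain ⟨T, hTT₀, hlinkT, hTr⟩ := hlink.exists_subset_card_eq (le_max_left _ _) hr
  exact ⟨T, hTT₀.trans hT₀B, mem_filter.mpr ⟨mem_univ _, hTr, hdisj.subset (by simpa using hTT₀),
    b₀, hne b₀ hb₀, hlinkT⟩⟩

end ConstraintGraph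

section UnionBound

variable {n q m : ℕ} {vbl : Fin m → Finset (Fin n)} {viol : Fin m → (Fin n → Fin q) → Prop}
  {p' : ℝ} {Δ : ℕ}

lemma filter_connected_dangerous_subset (hdep : ∀ j, DependsOn (viol j) (vbl j))
    (hdeg : ∀ i, (constraintGraph vbl).degree i ≤ Δ)
    (hbase : ∀ j, condP viol j (fun _ => none) ≤ p') (L : ℝ) :
    (univ.filter fun ω : Fin n → Fin q =>
      ∃ B : Finset (Fin m), (∀ j ∈ B, j ∈ dangerous vbl viol p' ω) ∧ L ≤ (B.card : ℝ) ∧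
        ((constraintGraphSq vbl).induce (B : Set (Fin m))).Connected)
      ⊆ (twoThreeTrees vbl (max 1 ⌈L / (Δ + 1)⌉₊)).biUnion (dangerousAtEnd vbl viol p') := by
  intro ω hω
  obtain ⟨B, hBd, hBL, hconn⟩ := (mem_filter.mp hω).2
  obtain ⟨T, hTB, hT⟩ := exists_subset_mem_twoThreeTrees hdeg hconn
    (fun j hj => vbl_nonempty_of_mem_dangerous hdep (hbase j) (hBd j hj)) hBL
  exact mem_biUnion.mpr ⟨T, hT, mem_filter.mpr ⟨mem_univ _,
    fun j hj => lt_condP_final_of_mem_dangerous hdep (hbase j) (hBd j (hTB hj))⟩⟩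

lemma card_biUnion_dangerousAtEnd_le (hq : 0 < q) (hdep : ∀ j, DependsOn (viol j) (vbl j))
    (hdeg : ∀ i, (constraintGraph vbl).degree i ≤ Δ) (hp' : 0 < p') {p c : ℝ}
    (hp : ∀ j, condP viol j (fun _ => none) ≤ p) (hc : 0 ≤ c) (hpc : p ≤ p' * c) {r : ℕ}
    (hr : 1 ≤ r) :
    (#((twoThreeTrees vbl r).biUnion (dangerousAtEnd vbl viol p')) : ℝ)
      ≤ (n * (Δ + 1) * (4 * (Δ * (Δ - 1) * Δ)) ^ (r - 1) : ℕ) * (q ^ n * c ^ r) := by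
  calc _ ≤ ∑ T ∈ twoThreeTrees vbl r, (#(dangerousAtEnd vbl viol p' T) : ℝ) := by
        exact_mod_cast card_biUnion_le
    _ ≤ #(twoThreeTrees vbl r) * (q ^ n * c ^ r) := by
        rw [← nsmul_eq_mul]
        refine sum_le_card_nsmul _ _ _ fun T hT => ?_
        obtain ⟨hTr, hdisj, -⟩ := (mem_filter.mp hT).2
        rw [← hTr]
        exact card_dangerousAtEnd_le hq hdep hdisj (card_pos.mp (hTr ▸ hr)) hp' hp hpc
    _ ≤ _ := mul_le_mul_of_nonneg_right (Nat.cast_le.mpr (card_twoThreeTrees_le hdeg r))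
        (by positivity)

end UnionBound

lemma two_rpow_one_add_one_div_le {Δ : ℝ} (hΔ : 1 ≤ Δ) :
    (2 : ℝ) ^ (1 + 1 / Δ) ≤ 2 * (1 + 1 / Δ) := by
  have h := rpow_one_add_le_one_add_mul_self (s := 1) (by norm_num) (p := 1 / Δ)
    (by positivity) (div_le_one_of_le₀ hΔ (by positivity))
  rw [Real.rpow_add two_pos, Real.rpow_one]
  norm_num at h ⊢
  linarith

lemma tree_count_mul_pow_le {Δ : ℝ} (hΔ : 1 ≤ Δ) {r : ℕ} (hr : 1 ≤ r) {L : ℝ}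
    (hL : L ≤ r * (Δ + 1)) :
    (Δ + 1) * (4 * (Δ * (Δ - 1) * Δ)) ^ (r - 1) * (1 / (10 * Δ ^ 3)) ^ r
      ≤ Δ * 2 ^ (-(L / Δ)) := by
  obtain ⟨s, rfl⟩ := Nat.exists_eq_add_of_le' hr
  have hΔ0 : 0 < Δ := by linarith
  have hdecay : (Δ / (2 * (Δ + 1))) ^ (s + 1) ≤ (2 : ℝ) ^ (-(L / Δ)) := by
    calc (Δ / (2 * (Δ + 1))) ^ (s + 1) = ((2 * (1 + 1 / Δ)) ^ (s + 1))⁻¹ := by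
          rw [← inv_pow]; congr 1; field_simp
      _ ≤ (((2 : ℝ) ^ (1 + 1 / Δ)) ^ (s + 1))⁻¹ := by
          gcongr
          exact two_rpow_one_add_one_div_le hΔ
      _ = 2 ^ (-((s + 1 : ℕ) * (1 + 1 / Δ))) := by
          rw [Real.rpow_neg two_pos.le, ← Real.rpow_natCast, ← Real.rpow_mul two_pos.le, mul_comm]
      _ ≤ 2 ^ (-(L / Δ)) := by
          gcongr
          · norm_num
          · rw [div_le_iff₀ hΔ0]
            calc L ≤ (s + 1 : ℕ) * (Δ + 1) := hL
              _ = _ := by field_simp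
  refine le_trans ?_ (mul_le_mul_of_nonneg_left hdecay hΔ0.le)
  have h1 : 2 * (Δ + 1) ^ 2 ≤ 10 * Δ ^ 5 := by
    nlinarith [pow_le_pow_right₀ hΔ (by norm_num : 2 ≤ 5)]
  have h2 : 4 * (Δ * (Δ - 1) * Δ) * (2 * (Δ + 1)) ≤ 10 * Δ ^ 4 := by nlinarith [sq_nonneg Δ]
  rw [Nat.add_sub_cancel, one_div_pow, div_pow, mul_one_div, ← mul_div_assoc,
    div_le_div_iff₀ (by positivity) (by positivity)]
  calc (Δ + 1) * (4 * (Δ * (Δ - 1) * Δ)) ^ s * (2 * (Δ + 1)) ^ (s + 1)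
      = 2 * (Δ + 1) ^ 2 * (4 * (Δ * (Δ - 1) * Δ) * (2 * (Δ + 1))) ^ s := by
        rw [mul_pow (4 * (Δ * (Δ - 1) * Δ)), pow_succ]; ring
    _ ≤ 10 * Δ ^ 5 * (10 * Δ ^ 4) ^ s := by gcongr
    _ = Δ * Δ ^ (s + 1) * (10 * Δ ^ 3) ^ (s + 1) := by ring

theorem dangerous_small_components_general {n q m : ℕ} (hq : 0 < q)
    (vbl : Fin m → Finset (Fin n)) (viol : Fin m → (Fin n → Fin q) → Prop)
    (hdep : ∀ j (σ τ : Fin n → Fin q), (∀ v ∈ vbl j, σ v = τ v) → (viol j σ ↔ viol j τ))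
    (Δ : ℕ) (hΔ : 1 ≤ Δ)
    (hdeg : ∀ i : Fin m,
      ((Finset.univ.filter fun j => j ≠ i ∧ (vbl i ∩ vbl j).Nonempty).card : ℝ) ≤ Δ)
    (p' : ℝ) (hp' : p' ∈ Set.Ioo (0 : ℝ) 1)
    (p : ℝ) (hp : ∀ j, condP viol j (fun _ => none) ≤ p)
    (hpp' : p ≤ p' / (10 * (Δ : ℝ) ^ 3))
    (L : ℝ) :
    (((Finset.univ.filter fun ω : Fin n → Fin q =>
          ∃ B : Finset (Fin m), (∀ j ∈ B, j ∈ dangerous vbl viol p' ω) ∧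
            L ≤ (B.card : ℝ) ∧
            ((constraintGraphSq vbl).induce (B : Set (Fin m))).Connected).card : ℝ))
        / (q : ℝ) ^ n
      ≤ (n : ℝ) * Δ * (2 : ℝ) ^ (-(L / Δ)) := by
  have hdep' (j : Fin m) : DependsOn (viol j) (vbl j) := fun σ τ h => propext (hdep j σ τ h)
  have hdeg' := degree_constraintGraph_le hdeg
  have hΔ' : (1 : ℝ) ≤ Δ := by exact_mod_cast hΔ
  have hbase (j : Fin m) : condP viol j (fun _ => none) ≤ p' :=
    (hp j).trans (hpp'.trans (div_le_self hp'.1.le (by nlinarith [one_le_pow₀ (n := 3) hΔ'])))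
  set r := max 1 ⌈L / (Δ + 1)⌉₊ with hr
  have hr1 : 1 ≤ r := by rw [hr]; exact le_max_left _ _
  have hLr : L ≤ r * (Δ + 1) := by
    rw [← div_le_iff₀ (by positivity), hr]
    exact (Nat.le_ceil _).trans (Nat.cast_le.mpr (le_max_right _ _))
  have hcount := card_biUnion_dangerousAtEnd_le hq hdep' hdeg' hp'.1 hp
    (c := 1 / (10 * Δ ^ 3)) (by positivity) (by rwa [mul_one_div]) hr1
  push_cast [Nat.cast_sub hΔ] at hcount
  refine div_le_of_le_mul₀ (by positivity) (by positivity) ?_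
  calc _ ≤ (#((twoThreeTrees vbl r).biUnion (dangerousAtEnd vbl viol p')) : ℝ) :=
        Nat.cast_le.mpr (card_le_card (filter_connected_dangerous_subset hdep' hdeg' hbase L))
    _ ≤ n * ((Δ + 1) * (4 * (Δ * (Δ - 1) * Δ)) ^ (r - 1) * (1 / (10 * Δ ^ 3)) ^ r) * q ^ n :=
        hcount.trans_eq (by ring)
    _ ≤ n * (Δ * 2 ^ (-(L / Δ))) * q ^ n := mul_le_mul_of_nonneg_right
        (mul_le_mul_of_nonneg_left (tree_count_mul_pow_le hΔ' hr1 hLr) (by positivity))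
        (by positivity)
    _ = n * Δ * 2 ^ (-(L / Δ)) * q ^ n := by ring

/-- If each constraint shares a variable with at most `Δ` other constraints, `ℙ[C] ≤ p`
for every constraint, and `p ≤ p'/(10Δ³)`, then for every `L ≥ 0` the `ν`-probability that
the graph `G²(ℱ)` (the subgraph of `G²(𝒞)` induced by the dangerous constraints `ℱ`) has a
connected component of size at least `L` — equivalently, that there exists `B ⊆ ℱ` with
`|B| ≥ L` inducing a connected subgraph of `G²(𝒞)` — is at most `n·Δ·2^(−L/Δ)`. -/
theorem dangerous_small_components {n q m : ℕ} (hq : 0 < q)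
    (vbl : Fin m → Finset (Fin n)) (viol : Fin m → (Fin n → Fin q) → Prop)
    (hdep : ∀ j (σ τ : Fin n → Fin q), (∀ v ∈ vbl j, σ v = τ v) → (viol j σ ↔ viol j τ))
    (Δ : ℕ) (hΔ : 1 ≤ Δ)
    (hdeg : ∀ i : Fin m,
      ((Finset.univ.filter fun j => j ≠ i ∧ (vbl i ∩ vbl j).Nonempty).card : ℝ) ≤ Δ)
    (p' : ℝ) (hp' : p' ∈ Set.Ioo (0 : ℝ) 1)
    (p : ℝ) (hp : ∀ j, condP viol j (fun _ => none) ≤ p)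
    (hpp' : p ≤ p' / (10 * (Δ : ℝ) ^ 3))
    (L : ℝ) (hL : 0 ≤ L) :
    (((Finset.univ.filter fun ω : Fin n → Fin q =>
          ∃ B : Finset (Fin m), (∀ j ∈ B, j ∈ dangerous vbl viol p' ω) ∧
            L ≤ (B.card : ℝ) ∧
            ((constraintGraphSq vbl).induce (B : Set (Fin m))).Connected).card : ℝ))
        / (q : ℝ) ^ n
      ≤ (n : ℝ) * Δ * (2 : ℝ) ^ (-(L / Δ)) :=
  dangerous_small_components_general hq vbl viol hdep Δ hΔ hdeg p' hp' p hp hpp' L
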